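/- arXiv:1607.07530 — 4 statements merged into one kernel-verified Lean document; each statement's English description precedes it below -/
import Mathlib

section
/- Uniqueness of the resonance pair: fix n ≥ 1, λ : {1,…,n} → ℤ_{≥0} nonzero with i₀ = max supp(λ), and integers r, k with k > 0. Define r_i = r_{i₀} − 2·Σ_{j=i}^{i₀−1} λ(j) + i − i₀ for i ∈ supp(λ), where r_{i₀} = 1 − λ(i₀). Suppose (p, k') and (p', k'') are pairs with p, p' ∈ supp(λ), 1 ≤ k' ≤ λ(p), 1 ≤ k'' ≤ λ(p'), satisfying r + 2k + n − p + 2 = r_p + 2k' and r + 2k + n − p' + 2 = r_{p'} + 2k''. Then p = p' and k' = k''. -/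
/-! Both resonance equations say that `r_p + p + 2k'` takes one and the same value. Going from
`p` to any `p' > p` in `supp λ`, the quantity `r_i + i` grows by `2 Σ_{p ≤ j < p'} λ(j) + 2(p' − p)`,
which exceeds the whole range `0 ≤ 2k' ≤ 2λ(p)` of the second summand, so the value determines
`(p, k')`. -/

/-- `r_i = r_{i₀} − 2·Σ_{j=i}^{i₀−1} λ(j) + i − i₀`, where `r_{i₀} = 1 − λ(i₀)`. -/
def rfun (lam : ℕ → ℕ) (i0 i : ℕ) : ℤ :=
  (1 - (lam i0 : ℤ)) - 2 * (∑ j ∈ Finset.Icc i (i0 - 1), (lam j : ℤ)) + (i : ℤ) - (i0 : ℤ)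

section

variable (lam : ℕ → ℕ) {i0 p p' : ℕ}

theorem rfun_sub_rfun (hpp' : p < p') (hp'i0 : p' ≤ i0) :
    rfun lam i0 p' - rfun lam i0 p = 2 * ∑ j ∈ Finset.Ico p p', (lam j : ℤ) + (p' - p) := by
  have hIcc : ∀ i, Finset.Icc i (i0 - 1) = Finset.Ico i i0 := fun i => by
    ext j
    simp only [Finset.mem_Icc, Finset.mem_Ico]
    omega
  have hsplit := Finset.sum_Ico_consecutive (fun j => (lam j : ℤ)) hpp'.le hp'i0
  simp only [rfun, hIcc]
  linarith

theorem rfun_add_two_mul_lt_rfun_add (hpp' : p < p') (hp'i0 : p' ≤ i0) :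
    rfun lam i0 p + p + 2 * lam p < rfun lam i0 p' + p' := by
  have hle : (lam p : ℤ) ≤ ∑ j ∈ Finset.Ico p p', (lam j : ℤ) :=
    Finset.single_le_sum (f := fun j => (lam j : ℤ)) (fun _ _ => by positivity)
      (Finset.mem_Ico.mpr ⟨le_rfl, hpp'⟩)
  have hgap : (p : ℤ) < p' := by exact_mod_cast hpp'
  linarith [rfun_sub_rfun lam hpp' hp'i0]

theorem eq_and_eq_of_rfun_add_two_mul_eq {k k' : ℕ} (hpi0 : p ≤ i0) (hp'i0 : p' ≤ i0)
    (hk : k ≤ lam p) (hk' : k' ≤ lam p')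
    (h : rfun lam i0 p + p + 2 * k = rfun lam i0 p' + p' + 2 * k') :
    p = p' ∧ k = k' := by
  have hk : (k : ℤ) ≤ lam p := by exact_mod_cast hk
  have hk' : (k' : ℤ) ≤ lam p' := by exact_mod_cast hk'
  rcases lt_trichotomy p p' with hlt | rfl | hgt
  · linarith [rfun_add_two_mul_lt_rfun_add lam hlt hp'i0]
  · exact ⟨rfl, by linarith⟩
  · linarith [rfun_add_two_mul_lt_rfun_add lam hgt hpi0]

end

theorem stmt_11_general (n : ℕ) (lam : ℕ → ℕ) (i0 : ℕ)
    (hmax : ∀ i, i0 < i → lam i = 0)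
    (r k : ℤ)
    (p p' : ℕ) (k' k'' : ℕ)
    (hp : lam p ≠ 0) (hp' : lam p' ≠ 0)
    (hk'2 : k' ≤ lam p) (hk''2 : k'' ≤ lam p')
    (he1 : r + 2 * k + (n : ℤ) - (p : ℤ) + 2 = rfun lam i0 p + 2 * (k' : ℤ))
    (he2 : r + 2 * k + (n : ℤ) - (p' : ℤ) + 2 = rfun lam i0 p' + 2 * (k'' : ℤ)) :
    p = p' ∧ k' = k'' := by
  have le_of_mem_support : ∀ {i}, lam i ≠ 0 → i ≤ i0 := fun hi =>
    not_lt.mp fun h => hi (hmax _ h)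
  exact eq_and_eq_of_rfun_add_two_mul_eq lam (le_of_mem_support hp) (le_of_mem_support hp')
    hk'2 hk''2 (by linarith)

/-- Uniqueness of the resonance pair: if `(p,k')` and `(p',k'')` both satisfy
`r + 2k + n − p + 2 = r_p + 2k'` with `p ∈ supp(λ)` and `1 ≤ k' ≤ λ(p)`, then
`p = p'` and `k' = k''`. -/
theorem stmt_11 (n : ℕ) (hn : 1 ≤ n) (lam : ℕ → ℕ) (i0 : ℕ) (hi0n : i0 ≤ n)
    (hi0 : lam i0 ≠ 0) (hmax : ∀ i, i0 < i → lam i = 0)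
    (r k : ℤ) (hk : 0 < k)
    (p p' : ℕ) (k' k'' : ℕ)
    (hp1 : 1 ≤ p) (hp : lam p ≠ 0) (hp1' : 1 ≤ p') (hp' : lam p' ≠ 0)
    (hk'1 : 1 ≤ k') (hk'2 : k' ≤ lam p) (hk''1 : 1 ≤ k'') (hk''2 : k'' ≤ lam p')
    (he1 : r + 2 * k + (n : ℤ) - (p : ℤ) + 2 = rfun lam i0 p + 2 * (k' : ℤ))
    (he2 : r + 2 * k + (n : ℤ) - (p' : ℤ) + 2 = rfun lam i0 p' + 2 * (k'' : ℤ)) :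
    p = p' ∧ k' = k'' :=
  stmt_11_general n lam i0 hmax r k p p' k' k'' hp hp' hk'2 hk''2 he1 he2
end

section
/- Gap lemma: let T : {1,…,k} → {1,…,n+1} be a strictly increasing column tableau with shape (k,s), and suppose T(j) = l₁ and T(j+1) = l₂ with 1 ≤ l₁ < l₂ − 1 ≤ n for some 1 ≤ j ≤ k−1. Then in the element ω^T = ∏_{m=1}^{k} Y_{T(m)−1, s+2(k−m)+T(m)}^{-1}·Y_{T(m), s+2(k−m)+T(m)−1} of the free abelian group 𝒫_ℤ, the generator Y_{l₁, s+2(k−j)+l₁−1} occurs with positive exponent and the generator Y_{l₂−1, s+2(k−j−1)+l₂} occurs with negative exponent. -/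
/-- `Y_{i,t}` in the free abelian group `𝒫_ℤ` on the symbols `Y_{i,t}`, `1 ≤ i ≤ n`,
`t ∈ ℤ`, with the convention `Y_{0,t} = Y_{n+1,t} = 1` (here `0`). -/
noncomputable def Ysym (n : ℕ) (i : ℕ) (t : ℤ) : (ℕ × ℤ) →₀ ℤ :=
  if 1 ≤ i ∧ i ≤ n then Finsupp.single (i, t) 1 else 0

/-- The box `⟦i⟧_a = Y_{i-1,a+i}^{-1} · Y_{i,a+i-1}`, written additively. -/
noncomputable def boxWt (n : ℕ) (i : ℕ) (a : ℤ) : (ℕ × ℤ) →₀ ℤ :=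
  Ysym n i (a + i - 1) - Ysym n (i - 1) (a + i)

/-- `ω^T` for a column tableau `T` of length `k` with support starting at `s`. -/
noncomputable def colWt (n k : ℕ) (s : ℤ) (T : ℕ → ℕ) : (ℕ × ℤ) →₀ ℤ :=
  ∑ j ∈ Finset.Icc 1 k, boxWt n (T j) (s + 2 * ((k : ℤ) - (j : ℤ)))

lemma boxWt_apply (n i : ℕ) (a : ℤ) (p : ℕ) (u : ℤ) :
    boxWt n i a (p, u) =
      (if 1 ≤ i ∧ i ≤ n ∧ p = i ∧ u = a + i - 1 then 1 else 0) -
        (if 1 ≤ i - 1 ∧ i - 1 ≤ n ∧ p = i - 1 ∧ u = a + i then 1 else 0) := by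
  simp only [boxWt, Ysym, Finsupp.coe_sub, Pi.sub_apply]
  congr 1 <;> split_ifs <;> simp_all [eq_comm]

/-- The box in row `m` of the column is supported on the diagonals `u - p = s + 2(k - m) ± 1`,
so the diagonal `u - p = s + 2(k - j) - 1` only meets the boxes in rows `j` and `j + 1`. -/
lemma colWt_apply_of_sub_eq {n k : ℕ} {s : ℤ} {T : ℕ → ℕ} {j p : ℕ} {u : ℤ}
    (hj : 1 ≤ j) (hjk : j + 1 ≤ k) (hu : u - p = s + 2 * ((k : ℤ) - j) - 1) :
    colWt n k s T (p, u) =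
      (if p = T j ∧ 1 ≤ p ∧ p ≤ n then 1 else 0) -
        (if p + 1 = T (j + 1) ∧ 1 ≤ p ∧ p ≤ n then 1 else 0) := by
  have hbox : ∀ m ∈ Finset.Icc 1 k, boxWt n (T m) (s + 2 * ((k : ℤ) - m)) (p, u) =
      (if j = m then (if p = T m ∧ 1 ≤ p ∧ p ≤ n then 1 else 0) else 0) -
        (if j + 1 = m then (if p + 1 = T m ∧ 1 ≤ p ∧ p ≤ n then 1 else 0) else 0) := by
    intro m _
    rw [boxWt_apply]
    congr 1 <;> split_ifs <;> first | rfl | omega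
  rw [colWt, Finsupp.finsetSum_apply, Finset.sum_congr rfl hbox, Finset.sum_sub_distrib,
    Finset.sum_ite_eq, Finset.sum_ite_eq, if_pos (Finset.mem_Icc.2 ⟨hj, by omega⟩),
    if_pos (Finset.mem_Icc.2 ⟨by omega, hjk⟩)]

theorem stmt_15_general (n k : ℕ) (s : ℤ) (T : ℕ → ℕ) (j l1 l2 : ℕ)
    (hj : 1 ≤ j) (hjk : j + 1 ≤ k) (hTj : T j = l1) (hTj1 : T (j + 1) = l2)
    (hl1 : 1 ≤ l1) (hgap : l1 + 1 < l2) (hl2 : l2 - 1 ≤ n) :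
    0 < colWt n k s T (l1, s + 2 * ((k : ℤ) - (j : ℤ)) + (l1 : ℤ) - 1) ∧
    colWt n k s T (l2 - 1, s + 2 * ((k : ℤ) - (j : ℤ) - 1) + (l2 : ℤ)) < 0 := by
  have hl2_cast : ((l2 - 1 : ℕ) : ℤ) = l2 - 1 := by omega
  -- Both generators lie on the diagonal through row `j`, and `l₁ ≠ l₂ - 1` by the gap.
  rw [colWt_apply_of_sub_eq hj hjk (by ring),
    colWt_apply_of_sub_eq hj hjk (by rw [hl2_cast]; ring), hTj, hTj1]
  constructor
  · rw [if_pos ⟨rfl, hl1, by omega⟩, if_neg (by omega)]; norm_num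
  · rw [if_neg (by omega), if_pos ⟨by omega, by omega, hl2⟩]; norm_num

/-- Gap lemma: if a strictly increasing column tableau `T` of shape `(k,s)` has
`T(j) = l₁` and `T(j+1) = l₂` with `1 ≤ l₁ < l₂ − 1 ≤ n`, then in `ω^T` the generator
`Y_{l₁, s+2(k−j)+l₁−1}` occurs with positive exponent and the generator
`Y_{l₂−1, s+2(k−j−1)+l₂}` occurs with negative exponent. -/
theorem stmt_15 (n k : ℕ) (s : ℤ) (T : ℕ → ℕ) (j l1 l2 : ℕ)
    (hrange : ∀ m, 1 ≤ m → m ≤ k → 1 ≤ T m ∧ T m ≤ n + 1)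
    (hmono : ∀ m m', 1 ≤ m → m < m' → m' ≤ k → T m < T m')
    (hj : 1 ≤ j) (hjk : j + 1 ≤ k) (hTj : T j = l1) (hTj1 : T (j + 1) = l2)
    (hl1 : 1 ≤ l1) (hgap : l1 + 1 < l2) (hl2 : l2 - 1 ≤ n) :
    0 < colWt n k s T (l1, s + 2 * ((k : ℤ) - (j : ℤ)) + (l1 : ℤ) - 1) ∧
    colWt n k s T (l2 - 1, s + 2 * ((k : ℤ) - (j : ℤ) - 1) + (l2 : ℤ)) < 0 :=
  stmt_15_general n k s T j l1 l2 hj hjk hTj hTj1 hl1 hgap hl2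
end

section
/- Diagonal lemma for staircase semi-standard tableaux: let T = (T₁,…,T_m) be a semi-standard tableau of staircase shape, meaning each column T_l is strictly increasing with values in {1,…,n+1}, the support of column l+1 starts exactly 2 lower than that of column l, and along each diagonal (left-to-right, top-to-bottom) the contents weakly decrease. If the box with content i and support s occurs in column j of T, then: (a) no other column of T contains a box with content i and support s; (b) if some column contains a box with content i−1 and support s+2, that column is column j; (c) if some column contains a box with content i+1 and support s−2, that column is column j. -/
/-!
Call `2 · content + support` the weight of a box; in all three claims the two boxes have equal
weight and supports differing by at most `2`. Following the diagonal through a box back to an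
earlier column never decreases the content, and going up that earlier column increases the
support by `2` and decreases the content by at least `1` per step. So a box strictly to the left
of a box of equal weight, with support at most `2` higher, would have a content exceeding its
own, and boxes of equal weight and nearby supports share a column.
-/

theorem StrictMonoOn.add_le_nat {f : ℕ → ℕ} {a b : ℕ} (hf : StrictMonoOn f (Set.Icc a b))
    {j : ℕ} (ha : a ≤ j) : ∀ {d : ℕ}, j + d ≤ b → f j + d ≤ f (j + d)
  | 0, _ => le_rfl
  | d + 1, hb => by
    have ih := StrictMonoOn.add_le_nat hf ha (d := d) (by omega)
    have hstep : f (j + d) < f (j + d + 1) :=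
      hf ⟨by omega, by omega⟩ ⟨by omega, by omega⟩ (by omega)
    show f j + (d + 1) ≤ f (j + d + 1)
    omega

namespace StaircaseTableau

def support (klen : ℕ → ℕ) (sfun : ℕ → ℤ) (l j : ℕ) : ℤ := sfun l + 2 * ((klen l : ℤ) - j)

structure IsSemistandardStaircase (m : ℕ) (klen : ℕ → ℕ) (sfun : ℕ → ℤ) (T : ℕ → ℕ → ℕ) :
    Prop where
  column_lt : ∀ l j j', 1 ≤ l → l ≤ m → 1 ≤ j → j < j' → j' ≤ klen l → T l j < T l j'
  sfun_succ : ∀ l, 1 ≤ l → l + 1 ≤ m → sfun (l + 1) = sfun l - 2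
  klen_succ_le : ∀ l, 1 ≤ l → l + 1 ≤ m → klen (l + 1) ≤ klen l
  diag_le : ∀ l j j', 1 ≤ l → l + 1 ≤ m → 1 ≤ j → j ≤ klen l → 1 ≤ j' → j' ≤ klen (l + 1) →
    support klen sfun (l + 1) j' = support klen sfun l j - 2 → T (l + 1) j' ≤ T l j

variable {m : ℕ} {klen : ℕ → ℕ} {sfun : ℕ → ℤ} {T : ℕ → ℕ → ℕ}

namespace IsSemistandardStaircase

theorem strictMonoOn_column (hT : IsSemistandardStaircase m klen sfun T) {l : ℕ} (hl : 1 ≤ l)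
    (hlm : l ≤ m) : StrictMonoOn (T l) (Set.Icc 1 (klen l)) :=
  fun _ hj _ hj' hjj' => hT.column_lt l _ _ hl hlm hj.1 hjj' hj'.2

theorem exists_diag_pred (hT : IsSemistandardStaircase m klen sfun T) {l j' : ℕ} (hl : 1 ≤ l)
    (hlm : l + 1 ≤ m) (hj' : 1 ≤ j') (hj'k : j' ≤ klen (l + 1)) :
    ∃ j, 1 ≤ j ∧ j ≤ klen l ∧ support klen sfun l j = support klen sfun (l + 1) j' + 2 ∧
      T (l + 1) j' ≤ T l j := by
  have hklen := hT.klen_succ_le l hl hlm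
  have hsupp : support klen sfun l (j' + (klen l - klen (l + 1))) =
      support klen sfun (l + 1) j' + 2 := by
    simp only [support, hT.sfun_succ l hl hlm]
    push_cast [hklen]
    ring
  exact ⟨_, by omega, by omega, hsupp,
    hT.diag_le l _ j' hl hlm (by omega) (by omega) hj' hj'k (by rw [hsupp]; ring)⟩

theorem exists_diag_ancestor (hT : IsSemistandardStaircase m klen sfun T) {l l' : ℕ}
    (hl : 1 ≤ l) (hll' : l ≤ l') (hl'm : l' ≤ m) {j' : ℕ} (hj' : 1 ≤ j') (hj'k : j' ≤ klen l') :
    ∃ j, 1 ≤ j ∧ j ≤ klen l ∧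
      support klen sfun l j = support klen sfun l' j' + 2 * ((l' : ℤ) - l) ∧ T l' j' ≤ T l j := by
  induction l', hll' using Nat.le_induction generalizing j' with
  | base => exact ⟨j', hj', hj'k, by ring, le_rfl⟩
  | succ l' hll' ih =>
    obtain ⟨j'', hj'', hj''k, hsupp', hT'⟩ :=
      hT.exists_diag_pred (by omega) hl'm hj' hj'k
    obtain ⟨j, hj, hjk, hsupp, hT''⟩ := ih (by omega) hj'' hj''k
    refine ⟨j, hj, hjk, ?_, hT'.trans hT''⟩
    rw [hsupp, hsupp']
    push_cast
    ring

theorem not_lt_of_weight_eq (hT : IsSemistandardStaircase m klen sfun T) {l l' j j' : ℕ}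
    (hl : 1 ≤ l) (hll' : l < l') (hl'm : l' ≤ m) (hjk : j ≤ klen l)
    (hj' : 1 ≤ j') (hj'k : j' ≤ klen l')
    (hweight : 2 * (T l j : ℤ) + support klen sfun l j = 2 * T l' j' + support klen sfun l' j')
    (hsupp : support klen sfun l j ≤ support klen sfun l' j' + 2) : False := by
  obtain ⟨jc, hjc, -, hsuppc, hTc⟩ := hT.exists_diag_ancestor hl hll'.le hl'm hj' hj'k
  have hjcj : jc ≤ j := by simp only [support] at hsuppc hsupp; omega
  have hcol := (hT.strictMonoOn_column hl (by omega)).add_le_nat hjc (d := j - jc) (by omega)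
  rw [Nat.add_sub_cancel' hjcj] at hcol
  simp only [support] at hsuppc hweight
  omega

theorem eq_of_weight_eq (hT : IsSemistandardStaircase m klen sfun T) {l l' j j' : ℕ}
    (hl : 1 ≤ l) (hlm : l ≤ m) (hj : 1 ≤ j) (hjk : j ≤ klen l)
    (hl' : 1 ≤ l') (hl'm : l' ≤ m) (hj' : 1 ≤ j') (hj'k : j' ≤ klen l')
    (hweight : 2 * (T l j : ℤ) + support klen sfun l j = 2 * T l' j' + support klen sfun l' j')
    (hsupp : |support klen sfun l j - support klen sfun l' j'| ≤ 2) : l = l' := by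
  rw [abs_sub_le_iff] at hsupp
  rcases lt_trichotomy l l' with hlt | heq | hgt
  · exact (hT.not_lt_of_weight_eq hl hlt hl'm hjk hj' hj'k hweight (by linarith)).elim
  · exact heq
  · exact (hT.not_lt_of_weight_eq hl' hgt hlm hj'k hj hjk hweight.symm (by linarith)).elim

end IsSemistandardStaircase

end StaircaseTableau

open StaircaseTableau in
theorem stmt_16_general (n m : ℕ) (klen : ℕ → ℕ) (sfun : ℕ → ℤ) (T : ℕ → ℕ → ℕ)
    (hrange : ∀ l j, 1 ≤ l → l ≤ m → 1 ≤ j → j ≤ klen l → 1 ≤ T l j ∧ T l j ≤ n + 1)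
    (hinc : ∀ l j j', 1 ≤ l → l ≤ m → 1 ≤ j → j < j' → j' ≤ klen l → T l j < T l j')
    (hstair1 : ∀ l, 1 ≤ l → l + 1 ≤ m → sfun (l + 1) = sfun l - 2)
    (hstair2 : ∀ l, 1 ≤ l → l + 1 ≤ m → klen (l + 1) ≤ klen l)
    (hdiag : ∀ l j j', 1 ≤ l → l + 1 ≤ m → 1 ≤ j → j ≤ klen l → 1 ≤ j' → j' ≤ klen (l + 1) →
      sfun (l + 1) + 2 * ((klen (l + 1) : ℤ) - (j' : ℤ)) =
        sfun l + 2 * ((klen l : ℤ) - (j : ℤ)) - 2 →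
      T (l + 1) j' ≤ T l j)
    (i : ℕ) (s : ℤ) (l0 j0 : ℕ)
    (hl01 : 1 ≤ l0) (hl0m : l0 ≤ m) (hj01 : 1 ≤ j0) (hj0k : j0 ≤ klen l0)
    (hcontent : T l0 j0 = i) (hsupp : sfun l0 + 2 * ((klen l0 : ℤ) - (j0 : ℤ)) = s) :
    (∀ l j, 1 ≤ l → l ≤ m → 1 ≤ j → j ≤ klen l →
        T l j = i → sfun l + 2 * ((klen l : ℤ) - (j : ℤ)) = s → l = l0) ∧
    (∀ l j, 1 ≤ l → l ≤ m → 1 ≤ j → j ≤ klen l →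
        T l j = i - 1 → sfun l + 2 * ((klen l : ℤ) - (j : ℤ)) = s + 2 → l = l0) ∧
    (∀ l j, 1 ≤ l → l ≤ m → 1 ≤ j → j ≤ klen l →
        T l j = i + 1 → sfun l + 2 * ((klen l : ℤ) - (j : ℤ)) = s - 2 → l = l0) := by
  have hT : IsSemistandardStaircase m klen sfun T := ⟨hinc, hstair1, hstair2, hdiag⟩
  -- claim (b) uses the truncated `i - 1`, so it needs `i ≠ 0`
  have hi : 1 ≤ i := hcontent ▸ (hrange l0 j0 hl01 hl0m hj01 hj0k).1
  refine ⟨?_, ?_, ?_⟩ <;> intro l j hl hlm hj hjk hTlj hsupplj <;>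
    refine hT.eq_of_weight_eq hl hlm hj hjk hl01 hl0m hj01 hj0k ?_ (abs_le.2 ⟨?_, ?_⟩) <;>
    simp only [support, hTlj, hcontent, hsupplj, hsupp] <;> omega

/-- Diagonal lemma for staircase semi-standard tableaux.  A tableau with `m` columns is
given by lengths `klen l`, support starts `sfun l`, and contents `T l j ∈ {1,…,n+1}`
for `1 ≤ j ≤ klen l`; the `j`-th box of column `l` has support `sfun l + 2(klen l − j)`.
Staircase shape: `sfun (l+1) = sfun l − 2` and the top of each column lies strictly below
the top of the previous one (`klen (l+1) ≤ klen l`); semi-standard: columns strictly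
increase and contents weakly decrease along diagonals (left-to-right, top-to-bottom).
If the box with content `i` and support `s` occurs in column `l₀`, then:
(a) no other column contains a box with content `i` and support `s`;
(b) any box with content `i−1` and support `s+2` is in column `l₀`;
(c) any box with content `i+1` and support `s−2` is in column `l₀`. -/
theorem stmt_16 (n m : ℕ) (klen : ℕ → ℕ) (sfun : ℕ → ℤ) (T : ℕ → ℕ → ℕ)
    (hm : 1 ≤ m)
    (hk : ∀ l, 1 ≤ l → l ≤ m → 1 ≤ klen l)
    (hrange : ∀ l j, 1 ≤ l → l ≤ m → 1 ≤ j → j ≤ klen l → 1 ≤ T l j ∧ T l j ≤ n + 1)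
    (hinc : ∀ l j j', 1 ≤ l → l ≤ m → 1 ≤ j → j < j' → j' ≤ klen l → T l j < T l j')
    (hstair1 : ∀ l, 1 ≤ l → l + 1 ≤ m → sfun (l + 1) = sfun l - 2)
    (hstair2 : ∀ l, 1 ≤ l → l + 1 ≤ m → klen (l + 1) ≤ klen l)
    (hdiag : ∀ l j j', 1 ≤ l → l + 1 ≤ m → 1 ≤ j → j ≤ klen l → 1 ≤ j' → j' ≤ klen (l + 1) →
      sfun (l + 1) + 2 * ((klen (l + 1) : ℤ) - (j' : ℤ)) =
        sfun l + 2 * ((klen l : ℤ) - (j : ℤ)) - 2 →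
      T (l + 1) j' ≤ T l j)
    (i : ℕ) (s : ℤ) (l0 j0 : ℕ)
    (hl01 : 1 ≤ l0) (hl0m : l0 ≤ m) (hj01 : 1 ≤ j0) (hj0k : j0 ≤ klen l0)
    (hcontent : T l0 j0 = i) (hsupp : sfun l0 + 2 * ((klen l0 : ℤ) - (j0 : ℤ)) = s) :
    (∀ l j, 1 ≤ l → l ≤ m → 1 ≤ j → j ≤ klen l →
        T l j = i → sfun l + 2 * ((klen l : ℤ) - (j : ℤ)) = s → l = l0) ∧
    (∀ l j, 1 ≤ l → l ≤ m → 1 ≤ j → j ≤ klen l →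
        T l j = i - 1 → sfun l + 2 * ((klen l : ℤ) - (j : ℤ)) = s + 2 → l = l0) ∧
    (∀ l j, 1 ≤ l → l ≤ m → 1 ≤ j → j ≤ klen l →
        T l j = i + 1 → sfun l + 2 * ((klen l : ℤ) - (j : ℤ)) = s - 2 → l = l0) :=
  stmt_16_general n m klen sfun T hrange hinc hstair1 hstair2 hdiag i s l0 j0 hl01 hl0m hj01 hj0k
    hcontent hsupp
end

section
/- q-factorization for sl₂: let q ∈ ℂ× not be a root of unity and let ω be a dominant ℓ-weight for U_q(sl₂-hat), i.e., a polynomial ω(u) = ∏_j (1 − a_j u) with a_j ∈ ℂ×. Then there exist unique (up to reordering) m ≥ 0, a₁,…,a_m ∈ ℂ× and r₁,…,r_m ∈ ℤ_{≥1} such that ω = ∏_{j=1}^m ω_{a_j,r_j}, where ω_{a,r}(u) = ∏_{l=0}^{r-1}(1 − a q^{r−1−2l} u), and for all j ≠ l and all 0 ≤ p < min{r_j, r_l}, a_j/a_l ≠ q^{±(r_j + r_l − 2p)}. -/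
/-- The q-string of length `r` centered at `a`: the multiset
`{aq^{r−1}, aq^{r−3}, …, aq^{1−r}}` of roots of `ω_{a,r}`. -/
noncomputable def qstring (q a : ℂˣ) (r : ℕ) : Multiset ℂˣ :=
  (Multiset.range r).map fun l => a * q ^ ((r : ℤ) - 1 - 2 * (l : ℤ))

/-- The non-resonance condition between two q-strings `(a,r)` and `(b,s)`:
`a/b ≠ q^{±(r+s−2p)}` for all `0 ≤ p < min{r,s}`. -/
def nonres (q : ℂˣ) (x y : ℂˣ × ℕ) : Prop :=
  ∀ p : ℕ, p < min x.2 y.2 →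
    x.1 / y.1 ≠ q ^ ((x.2 : ℤ) + (y.2 : ℤ) - 2 * (p : ℤ)) ∧
    x.1 / y.1 ≠ (q ^ ((x.2 : ℤ) + (y.2 : ℤ) - 2 * (p : ℤ)))⁻¹

/-- `L` is a q-factorization of the dominant ℓ-weight with root multiset `S`: the strings
have positive lengths, their union is `S`, and distinct members are non-resonant. -/
def IsQFactorization (q : ℂˣ) (S : Multiset ℂˣ) (L : List (ℂˣ × ℕ)) : Prop :=
  (∀ x ∈ L, 1 ≤ x.2) ∧ (L.map fun x => qstring q x.1 x.2).sum = S ∧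
    ∀ i j : Fin L.length, i ≠ j → nonres q (L.get i) (L.get j)


/-!
Choose `c ∈ S` with `c q² ∉ S` and let `c, c q⁻², …, c q^{-2(r-1)}` be the longest chain in `S`
descending from `c` in steps of `q⁻²`. The q-string with top `c` and length `r` is non-resonant with
every q-string contained in `S`, since resonance would put `c q²` or `c q^{-2r}` into the latter.
It also occurs in every q-factorization of `S`: a longest string of the factorization through `c`
has top `c` and length `t ≤ r`, and if `t < r`, the string through `c q^{-2t}` either resonates with
it or passes through `c` and is longer. Removing this string, induction on `S` gives existence and
uniqueness.
-/

open Function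

section QString

variable {q : ℂˣ}

theorem zpow_injective_of_pow_ne_one (hq : ∀ k : ℕ, 1 ≤ k → q ^ k ≠ 1) :
    Injective fun n : ℤ => q ^ n :=
  injective_zpow_iff_not_isOfFinOrder.2 fun h =>
    let ⟨k, hk, hqk⟩ := isOfFinOrder_iff_pow_eq_one.1 h
    hq k hk hqk

-- In `qstring` the cast `(l : ℤ)` is elaborated by coercing the multiset `range r` itself.
theorem qstring_eq_map (a : ℂˣ) (r : ℕ) :
    qstring q a r = (Multiset.range r).map fun l : ℕ => a * q ^ ((r : ℤ) - 1 - 2 * (l : ℤ)) := by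
  simp [qstring, Multiset.map_map]

theorem card_qstring (a : ℂˣ) (r : ℕ) : (qstring q a r).card = r := by
  simp [qstring_eq_map]

theorem nodup_qstring (hq : Injective fun n : ℤ => q ^ n) (a : ℂˣ) (r : ℕ) :
    (qstring q a r).Nodup :=
  qstring_eq_map (q := q) a r ▸ (Multiset.nodup_range r).map fun l l' h => by
    have := hq (mul_left_cancel h)
    omega

theorem mul_zpow_mem_qstring (c : ℂˣ) {m n : ℤ} {s l : ℕ} (hl : l < s)
    (h : n = m + s - 1 - 2 * l) : c * q ^ n ∈ qstring q (c * q ^ m) s :=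
  qstring_eq_map (q := q) _ s ▸ Multiset.mem_map.2
    ⟨l, Multiset.mem_range.2 hl, by rw [mul_assoc, ← zpow_add, h]; congr 2; ring⟩

theorem mul_zpow_mem_qstring_iff (hq : Injective fun n : ℤ => q ^ n) (c : ℂˣ) {m n : ℤ}
    {s : ℕ} : c * q ^ n ∈ qstring q (c * q ^ m) s ↔ ∃ l < s, n = m + s - 1 - 2 * l := by
  refine ⟨fun h => ?_, fun ⟨l, hl, h⟩ => mul_zpow_mem_qstring c hl h⟩
  obtain ⟨l, hl, hn⟩ := Multiset.mem_map.1 (qstring_eq_map (q := q) _ s ▸ h)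
  rw [mul_assoc, ← zpow_add, mul_right_inj] at hn
  have := hq hn
  exact ⟨l, Multiset.mem_range.1 hl, by omega⟩

theorem exists_eq_mul_zpow_of_mem_qstring {a x : ℂˣ} {s : ℕ} (hx : x ∈ qstring q a s) :
    ∃ l < s, a = x * q ^ (1 + 2 * (l : ℤ) - s) := by
  obtain ⟨l, hl, rfl⟩ := Multiset.mem_map.1 (qstring_eq_map (q := q) a s ▸ hx)
  refine ⟨l, Multiset.mem_range.1 hl, ?_⟩
  rw [mul_assoc, ← zpow_add, show (s : ℤ) - 1 - 2 * l + (1 + 2 * l - s) = 0 by ring, zpow_zero,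
    mul_one]

theorem mul_zpow_div_mul_zpow (c : ℂˣ) (m n : ℤ) : c * q ^ m / (c * q ^ n) = q ^ (m - n) := by
  rw [mul_div_mul_left_eq_div, zpow_sub, div_eq_mul_inv]

theorem nonres_comm {x y : ℂˣ × ℕ} (h : nonres q x y) : nonres q y x := by
  intro p hp
  obtain ⟨h₁, h₂⟩ := h p (min_comm x.2 y.2 ▸ hp)
  rw [add_comm (y.2 : ℤ)]
  exact ⟨fun h => h₂ (by rw [← h, inv_div]), fun h => h₁ (by rw [← inv_div, h, inv_inv])⟩

theorem nonres_self (hq : Injective fun n : ℤ => q ^ n) (x : ℂˣ × ℕ) : nonres q x x := by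
  intro p hp
  have hp : p < x.2 := by simpa using hp
  simp only [div_self', ← zpow_neg]
  exact ⟨fun h => by have := hq ((zpow_zero q).trans h); omega,
    fun h => by have := hq ((zpow_zero q).trans h); omega⟩

theorem center_eq_of_mem_qstring_of_notMem (hq : Injective fun n : ℤ => q ^ n) {a c : ℂˣ}
    {s : ℕ} (hc : c ∈ qstring q a s) (hc2 : c * q ^ (2 : ℤ) ∉ qstring q a s) :
    a = c * q ^ (1 - (s : ℤ)) := by
  obtain ⟨l, hl, rfl⟩ := exists_eq_mul_zpow_of_mem_qstring hc
  rw [mul_zpow_mem_qstring_iff hq] at hc2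
  obtain rfl : l = 0 := by
    by_contra hl0
    exact hc2 ⟨l - 1, by omega, by omega⟩
  simp

theorem le_of_mul_zpow_notMem_qstring (c : ℂˣ) {r s : ℕ}
    (h : c * q ^ (-2 * (r : ℤ)) ∉ qstring q (c * q ^ (1 - (s : ℤ))) s) : s ≤ r := by
  by_contra! hrs
  exact h (mul_zpow_mem_qstring c hrs (by ring))

theorem not_nonres_or_mem_qstring (hq : Injective fun n : ℤ => q ^ n) {b c : ℂˣ} {s t : ℕ}
    (hc : c * q ^ (-2 * (t : ℤ)) ∈ qstring q b s) (hc2 : c * q ^ (2 : ℤ) ∉ qstring q b s) :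
    ¬ nonres q (c * q ^ (1 - (t : ℤ)), t) (b, s) ∨ (c ∈ qstring q b s ∧ t < s) := by
  obtain ⟨l, hl, rfl⟩ := exists_eq_mul_zpow_of_mem_qstring hc
  rw [mul_assoc, ← zpow_add] at hc2 ⊢
  rw [mul_zpow_mem_qstring_iff hq] at hc2
  rcases lt_trichotomy l t with hlt | rfl | hgt
  · refine .inl fun h => (h l (lt_min hlt hl)).1 ?_
    rw [mul_zpow_div_mul_zpow]
    congr 1
    ring
  · refine .inr ⟨?_, hl⟩
    simpa using mul_zpow_mem_qstring (q := q) c (n := 0) (l := 0) (Nat.zero_lt_of_lt hl)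
      (m := -2 * l + (1 + 2 * l - s)) (by ring)
  · exact absurd ⟨l - t - 1, by omega, by omega⟩ hc2

theorem nonres_of_notMem_qstring {b c : ℂˣ} {r s : ℕ} (hc2 : c * q ^ (2 : ℤ) ∉ qstring q b s)
    (hcr : c * q ^ (-2 * (r : ℤ)) ∉ qstring q b s) :
    nonres q (c * q ^ (1 - (r : ℤ)), r) (b, s) := by
  intro p hp
  dsimp only at hp ⊢
  have hps : p < s := (lt_min_iff.1 hp).2
  have hb {u : ℂˣ} (h : c * q ^ (1 - (r : ℤ)) / b = u) : b = c * q ^ (1 - (r : ℤ)) / u := by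
    rw [← h, div_div_cancel]
  constructor <;> intro h
  · rw [hb h, mul_div_assoc, div_eq_mul_inv, ← zpow_neg, ← zpow_add] at hcr
    exact hcr (mul_zpow_mem_qstring c hps (by omega))
  · rw [hb h, div_inv_eq_mul, mul_assoc, ← zpow_add] at hc2
    exact hc2 (mul_zpow_mem_qstring c (l := s - 1 - p) (by omega) (by omega))

theorem qstring_le_of_forall_mem (hq : Injective fun n : ℤ => q ^ n) {S : Multiset ℂˣ} {c : ℂˣ}
    {r : ℕ} (h : ∀ l < r, c * q ^ (-2 * (l : ℤ)) ∈ S) :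
    qstring q (c * q ^ (1 - (r : ℤ))) r ≤ S := by
  rw [Multiset.le_iff_subset (nodup_qstring hq _ _)]
  intro z hz
  obtain ⟨l, hl, rfl⟩ := Multiset.mem_map.1 (qstring_eq_map (q := q) _ r ▸ hz)
  rw [mul_assoc, ← zpow_add]
  convert h l (Multiset.mem_range.1 hl) using 3
  ring

theorem finite_setOf_mul_zpow_two_mul_mem (hq : Injective fun n : ℤ => q ^ n) (c : ℂˣ)
    (S : Multiset ℂˣ) : {k : ℤ | c * q ^ (2 * k) ∈ S}.Finite :=
  S.finite_toSet.preimage fun k _ l _ h => by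
    have := hq (mul_left_cancel h)
    omega

theorem exists_mem_mul_zpow_two_notMem (hq : Injective fun n : ℤ => q ^ n) {S : Multiset ℂˣ}
    (hS : S ≠ 0) : ∃ c ∈ S, c * q ^ (2 : ℤ) ∉ S := by
  obtain ⟨c, hc⟩ := Multiset.exists_mem_of_ne_zero hS
  obtain ⟨B, hB⟩ := (finite_setOf_mul_zpow_two_mul_mem hq c S).bddAbove
  obtain ⟨k, hk, hkmax⟩ :=
    Int.exists_greatest_of_bdd ⟨B, fun z hz => hB hz⟩ ⟨0, by simpa using hc⟩
  refine ⟨c * q ^ (2 * k), hk, fun h => ?_⟩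
  have := hkmax (k + 1)
    (show c * q ^ (2 * (k + 1)) ∈ S by rwa [mul_add, zpow_add, ← mul_assoc, mul_one])
  omega

theorem exists_maximal_chain (hq : Injective fun n : ℤ => q ^ n) {S : Multiset ℂˣ} (hS : S ≠ 0) :
    ∃ (c : ℂˣ) (r : ℕ), 1 ≤ r ∧ c * q ^ (2 : ℤ) ∉ S ∧ (∀ l < r, c * q ^ (-2 * (l : ℤ)) ∈ S) ∧
      c * q ^ (-2 * (r : ℤ)) ∉ S := by
  obtain ⟨c, hc, hc2⟩ := exists_mem_mul_zpow_two_notMem hq hS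
  obtain ⟨b, hb⟩ := (finite_setOf_mul_zpow_two_mul_mem hq c S).bddBelow
  have hex : ∃ n : ℕ, c * q ^ (-2 * (n : ℤ)) ∉ S := ⟨(-b).toNat + 1, fun h => by
    have := hb (show c * q ^ (2 * -(((-b).toNat + 1 : ℕ) : ℤ)) ∈ S by rwa [← neg_mul_comm])
    omega⟩
  exact ⟨c, Nat.find hex, (Nat.find_pos hex).2 (by simpa using hc), hc2,
    fun l hl => not_not.1 (Nat.find_min hex hl), Nat.find_spec hex⟩

end QString

section QFactorization

variable {q : ℂˣ} {S : Multiset ℂˣ} {L L' : List (ℂˣ × ℕ)} {x : ℂˣ × ℕ}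

theorem isQFactorization_iff : IsQFactorization q S L ↔ (∀ x ∈ L, 1 ≤ x.2) ∧
    (L.map fun x => qstring q x.1 x.2).sum = S ∧ L.Pairwise (nonres q) := by
  refine and_congr_right' (and_congr_right' ?_)
  rw [List.pairwise_iff_get]
  exact ⟨fun h i j hij => h i j hij.ne,
    fun h i j hij => hij.lt_or_gt.elim (h i j) fun hji => nonres_comm (h j i hji)⟩

theorem isQFactorization_nil : IsQFactorization q 0 [] := by
  simp [isQFactorization_iff]

namespace IsQFactorization

theorem perm (hL : IsQFactorization q S L) (h : L.Perm L') : IsQFactorization q S L' := by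
  rw [isQFactorization_iff] at hL ⊢
  obtain ⟨hlen, hsum, hpw⟩ := hL
  exact ⟨fun x hx => hlen x (h.mem_iff.2 hx), (h.map _).sum_eq.symm.trans hsum,
    (h.pairwise_iff nonres_comm).1 hpw⟩

theorem cons (hL : IsQFactorization q S L) (hx : 1 ≤ x.2) (hxL : ∀ y ∈ L, nonres q x y) :
    IsQFactorization q (qstring q x.1 x.2 + S) (x :: L) := by
  rw [isQFactorization_iff] at hL ⊢
  obtain ⟨hlen, hsum, hpw⟩ := hL
  exact ⟨List.forall_mem_cons.2 ⟨hx, hlen⟩, by simp [hsum], hpw.cons hxL⟩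

theorem of_cons (h : IsQFactorization q S (x :: L)) :
    IsQFactorization q (S - qstring q x.1 x.2) L := by
  rw [isQFactorization_iff] at h ⊢
  obtain ⟨hlen, hsum, hpw⟩ := h
  refine ⟨fun y hy => hlen y (List.mem_cons_of_mem x hy), ?_, hpw.of_cons⟩
  rw [← hsum, List.map_cons, List.sum_cons, add_tsub_cancel_left]

theorem qstring_le (hL : IsQFactorization q S L) (hx : x ∈ L) : qstring q x.1 x.2 ≤ S :=
  hL.2.1 ▸ List.le_sum_of_mem (List.mem_map_of_mem hx)

theorem mem_of_mem_qstring (hL : IsQFactorization q S L) (hx : x ∈ L) {z : ℂˣ}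
    (hz : z ∈ qstring q x.1 x.2) : z ∈ S :=
  Multiset.mem_of_le (hL.qstring_le hx) hz

theorem exists_mem_qstring (hL : IsQFactorization q S L) {z : ℂˣ} (hz : z ∈ S) :
    ∃ x ∈ L, z ∈ qstring q x.1 x.2 := by
  rw [← hL.2.1, ← Multiset.sum_coe] at hz
  obtain ⟨m, hm, hzm⟩ := Multiset.mem_join.1 hz
  obtain ⟨x, hx, rfl⟩ := List.mem_map.1 (Multiset.mem_coe.1 hm)
  exact ⟨x, hx, hzm⟩

theorem eq_nil_of_zero (hL : IsQFactorization q 0 L) : L = [] := by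
  refine List.eq_nil_iff_forall_not_mem.2 fun x hx => ?_
  have hlen := hL.1 x hx
  rw [← card_qstring (q := q) x.1 x.2, Multiset.le_zero.1 (hL.qstring_le hx)] at hlen
  simp at hlen

theorem nonres_of_mem (hq : Injective fun n : ℤ => q ^ n) (hL : IsQFactorization q S L) {y : ℂˣ × ℕ}
    (hx : x ∈ L) (hy : y ∈ L) : nonres q x y := by
  have hpw := (isQFactorization_iff.1 hL).2.2
  exact hpw.forall_of_forall_of_flip (fun x _ => nonres_self hq x) (hpw.imp nonres_comm) hx hy

theorem mem_of_maximal_chain (hq : Injective fun n : ℤ => q ^ n) (hL : IsQFactorization q S L)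
    {c : ℂˣ} {r : ℕ} (hr : 1 ≤ r) (htop : c * q ^ (2 : ℤ) ∉ S)
    (hchain : ∀ l < r, c * q ^ (-2 * (l : ℤ)) ∈ S) (hbot : c * q ^ (-2 * (r : ℤ)) ∉ S) :
    (c * q ^ (1 - (r : ℤ)), r) ∈ L := by
  obtain ⟨x₀, hx₀⟩ := hL.exists_mem_qstring (by simpa using hchain 0 hr)
  obtain ⟨⟨a, t⟩, ⟨hxL, hcx⟩, hmax⟩ := Set.exists_max_image {x | x ∈ L ∧ c ∈ qstring q x.1 x.2}
    Prod.snd (L.finite_toSet.subset fun _ hx => hx.1) ⟨x₀, hx₀⟩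
  dsimp only at hcx hmax
  obtain rfl := center_eq_of_mem_qstring_of_notMem hq hcx fun h =>
    htop (hL.mem_of_mem_qstring hxL h)
  obtain rfl | ht :=
    (le_of_mul_zpow_notMem_qstring c fun h => hbot (hL.mem_of_mem_qstring hxL h)).eq_or_lt
  · exact hxL
  obtain ⟨⟨b, s⟩, hyL, hy⟩ := hL.exists_mem_qstring (hchain t ht)
  rcases not_nonres_or_mem_qstring hq hy fun h => htop (hL.mem_of_mem_qstring hyL h) with
    hres | ⟨hcy, hts⟩
  · exact (hres (hL.nonres_of_mem hq hxL hyL)).elim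
  · exact ((hmax _ ⟨hyL, hcy⟩).not_gt hts).elim

end IsQFactorization

end QFactorization

/-- q-factorization for sl₂: every dominant ℓ-weight (identified with the finite multiset
`S` of inverse roots of its Drinfeld polynomial) admits a q-factorization into q-strings
satisfying the non-resonance condition, unique up to reordering. -/
theorem stmt_17 (q : ℂˣ) (hq : ∀ k : ℕ, 1 ≤ k → q ^ k ≠ 1) (S : Multiset ℂˣ) :
    ∃ L : List (ℂˣ × ℕ), IsQFactorization q S L ∧
      ∀ L' : List (ℂˣ × ℕ), IsQFactorization q S L' → L'.Perm L := by
  have hinj := zpow_injective_of_pow_ne_one hq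
  induction S using Multiset.strongInductionOn with
  | _ S ih =>
  rcases eq_or_ne S 0 with rfl | hS
  · exact ⟨[], isQFactorization_nil, fun L' hL' => hL'.eq_nil_of_zero ▸ .nil⟩
  obtain ⟨c, r, hr, htop, hchain, hbot⟩ := exists_maximal_chain hinj hS
  set x : ℂˣ × ℕ := (c * q ^ (1 - (r : ℤ)), r)
  have hT : qstring q x.1 x.2 ≤ S := qstring_le_of_forall_mem hinj hchain
  have hlt : S - qstring q x.1 x.2 < S := by
    conv_rhs => rw [← add_tsub_cancel_of_le hT]
    exact lt_add_of_pos_left _ (pos_iff_ne_zero.2 (Multiset.card_pos.1 (by rwa [card_qstring])))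
  obtain ⟨L, hL, huniq⟩ := ih _ hlt
  refine ⟨x :: L, ?_, fun L' hL' => ?_⟩
  · rw [← add_tsub_cancel_of_le hT]
    exact hL.cons hr fun y hy => nonres_of_notMem_qstring
      (fun h => htop (Multiset.mem_of_le tsub_le_self (hL.mem_of_mem_qstring hy h)))
      (fun h => hbot (Multiset.mem_of_le tsub_le_self (hL.mem_of_mem_qstring hy h)))
  · have hperm := List.perm_cons_erase (hL'.mem_of_maximal_chain hinj hr htop hchain hbot)
    exact hperm.trans ((huniq _ (hL'.perm hperm).of_cons).cons x)
end
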